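/- arXiv:2310.13173 — 5 statements merged into one kernel-verified Lean document; each statement's English description precedes it below -/
import Mathlib

section
/- Let λ > 0 and (w, θ), (w', θ') ∈ ℝ × [−π, π). Then (1/Γ(1/2)) ∫_0^∞ t^{−1/2} e^{−λt} · (4πt)^{−1} e^{−(w−w')²/(4t)} · Σ_{n∈ℤ} e^{−(θ−θ'−2nπ)²/(4t)} dt = (1/2π) Σ_{n∈ℤ} ρ_n^{−1} e^{−√λ · ρ_n}, where ρ_n = √((w−w')² + (θ−θ'−2nπ)²) (and the point (w,θ) ≠ (w',θ') so that ρ_0 > 0). -/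
/-!
Each term of the lattice sum is a subordinated heat kernel of the plane. Substituting
`t = x⁻²` turns `∫₀^∞ t^{-3/2} e^{-λt - r²/(4t)} dt` into `2 ∫₀^∞ e^{-(a x² + b / x²)} dx`;
completing the square and the Cauchy–Schlömilch substitution `v = u - c / u` (whose Jacobian
`1 + c / u²` splits into two halves exchanged by the inversion `u ↦ c / u`) reduce this to the
Gaussian integral, giving `e^{-√λ r} / (2π r)` per term. The terms are positive and their
integrals decay geometrically in `n`, since `ρ_n ≥ 2π|n| - |θ - θ'|`, so the sum and the integral
commute. Finally `ρ_n > 0` for every `n` because `|θ - θ'| < 2π`.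
-/

open MeasureTheory Real Set Filter

lemma hasDerivAt_sub_div (c : ℝ) {u : ℝ} (hu : u ≠ 0) :
    HasDerivAt (fun u => u - c / u) (1 + c / u ^ 2) u :=
  ((hasDerivAt_id' u).fun_sub ((hasDerivAt_const u c).fun_div (hasDerivAt_id' u) hu)).congr_deriv
    (by field_simp; ring)

lemma hasDerivAt_const_div (c : ℝ) {u : ℝ} (hu : u ≠ 0) :
    HasDerivAt (fun u => c / u) (-(c / u ^ 2)) u :=
  ((hasDerivAt_const u c).fun_div (hasDerivAt_id' u) hu).congr_deriv (by ring)

section CauchySchlomilch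

variable {E : Type*} [NormedAddCommGroup E] [NormedSpace ℝ E] {c : ℝ}

lemma injOn_sub_div (hc : 0 ≤ c) : InjOn (fun u => u - c / u) (Ioi 0) := by
  intro u (hu : 0 < u) v (hv : 0 < v) huv
  have : (u - v) * (u * v + c) = 0 := by
    field_simp at huv
    linear_combination huv
  rcases mul_eq_zero.1 this with h | h
  · linarith
  · nlinarith [mul_pos hu hv]

lemma injOn_const_div (hc : c ≠ 0) : InjOn (fun u => c / u) (Ioi 0) := by
  intro u (hu : 0 < u) v (hv : 0 < v) huv
  field_simp at huv
  exact huv.symm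

lemma image_sub_div_Ioi (hc : 0 < c) : (fun u => u - c / u) '' Ioi 0 = univ := by
  refine eq_univ_of_forall fun v => ?_
  have hs := sq_sqrt (show 0 ≤ v ^ 2 + 4 * c by positivity)
  have hpos : 0 < v + √(v ^ 2 + 4 * c) := by
    have : |v| < √(v ^ 2 + 4 * c) := by
      rw [← sqrt_sq_eq_abs]; exact sqrt_lt_sqrt (sq_nonneg v) (by linarith)
    linarith [neg_abs_le v]
  refine ⟨(v + √(v ^ 2 + 4 * c)) / 2, half_pos hpos, ?_⟩
  field_simp
  linear_combination hs

lemma image_const_div_Ioi (hc : 0 < c) : (fun u => c / u) '' Ioi 0 = Ioi 0 := by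
  refine Subset.antisymm ?_ fun v (hv : 0 < v) => ⟨c / v, div_pos hc hv, div_div_cancel₀ hc.ne'⟩
  rintro _ ⟨u, hu : 0 < u, rfl⟩
  exact div_pos hc hu

lemma integral_Ioi_one_add_div_sq_smul_comp_sub_div (hc : 0 < c) (g : ℝ → E) :
    ∫ u in Ioi 0, (1 + c / u ^ 2) • g (u - c / u) = ∫ v, g v := by
  have h := integral_image_eq_integral_abs_deriv_smul measurableSet_Ioi
    (fun u hu => (hasDerivAt_sub_div c (ne_of_gt hu)).hasDerivWithinAt) (injOn_sub_div hc.le) g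
  rw [image_sub_div_Ioi hc, Measure.restrict_univ] at h
  rw [h]
  refine setIntegral_congr_fun measurableSet_Ioi fun u (hu : 0 < u) => ?_
  rw [abs_of_pos (by positivity)]

lemma integrableOn_Ioi_one_add_div_sq_smul_comp_sub_div_iff (hc : 0 < c) (g : ℝ → E) :
    IntegrableOn (fun u => (1 + c / u ^ 2) • g (u - c / u)) (Ioi 0) ↔ Integrable g := by
  have h := integrableOn_image_iff_integrableOn_abs_deriv_smul measurableSet_Ioi
    (fun u hu => (hasDerivAt_sub_div c (ne_of_gt hu)).hasDerivWithinAt) (injOn_sub_div hc.le) g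
  rw [image_sub_div_Ioi hc, integrableOn_univ] at h
  rw [h]
  refine integrableOn_congr_fun (fun u (hu : 0 < u) => ?_) measurableSet_Ioi
  rw [abs_of_pos (by positivity)]

lemma integral_Ioi_div_sq_smul_comp_const_div (hc : 0 < c) (g : ℝ → E) :
    ∫ u in Ioi 0, (c / u ^ 2) • g (c / u) = ∫ u in Ioi 0, g u := by
  have h := integral_image_eq_integral_abs_deriv_smul measurableSet_Ioi
    (fun u hu => (hasDerivAt_const_div c (ne_of_gt hu)).hasDerivWithinAt)
    (injOn_const_div hc.ne') g
  rw [image_const_div_Ioi hc] at h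
  rw [h]
  refine setIntegral_congr_fun measurableSet_Ioi fun u (hu : 0 < u) => ?_
  rw [abs_neg, abs_of_pos (by positivity)]

theorem integral_Ioi_comp_sub_div_of_even (hc : 0 < c) {g : ℝ → E} (hg : Integrable g)
    (heven : ∀ v, g (-v) = g v) :
    ∫ u in Ioi 0, g (u - c / u) = (2 : ℝ)⁻¹ • ∫ v, g v := by
  have hsum : IntegrableOn (fun u => (1 + c / u ^ 2) • g (u - c / u)) (Ioi 0) :=
    (integrableOn_Ioi_one_add_div_sq_smul_comp_sub_div_iff hc g).2 hg
  have hmain : IntegrableOn (fun u => g (u - c / u)) (Ioi 0) := by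
    have hmeas : Measurable fun u : ℝ => (1 + c / u ^ 2)⁻¹ := by fun_prop
    have hbdd : ∀ᵐ u ∂volume.restrict (Ioi 0), ‖(1 + c / u ^ 2)⁻¹‖ ≤ 1 := by
      filter_upwards [ae_restrict_mem measurableSet_Ioi] with u (hu : 0 < u)
      rw [norm_inv, Real.norm_of_nonneg (by positivity)]
      exact inv_le_one_of_one_le₀ (le_add_of_nonneg_right (by positivity))
    refine IntegrableOn.congr_fun (hsum.bdd_smul 1 hmeas.aestronglyMeasurable hbdd)
      (fun u (hu : 0 < u) => ?_) measurableSet_Ioi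
    simp only [Pi.smul_apply', smul_smul]
    rw [inv_mul_cancel₀ (by positivity), one_smul]
  have htail : IntegrableOn (fun u => (c / u ^ 2) • g (u - c / u)) (Ioi 0) :=
    (hsum.sub hmain).congr_fun
      (fun u _ => by simp only [Pi.sub_apply, add_smul, one_smul, add_sub_cancel_left])
      measurableSet_Ioi
  -- the inversion `u ↦ c / u` maps `u - c / u` to its negative
  have hinv : ∫ u in Ioi 0, (c / u ^ 2) • g (u - c / u) = ∫ u in Ioi 0, g (u - c / u) := by
    rw [← integral_Ioi_div_sq_smul_comp_const_div hc (fun u => g (u - c / u))]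
    refine setIntegral_congr_fun measurableSet_Ioi fun u (hu : 0 < u) => ?_
    rw [div_div_cancel₀ hc.ne', ← heven, neg_sub]
  rw [← integral_Ioi_one_add_div_sq_smul_comp_sub_div hc g]
  simp only [add_smul, one_smul]
  rw [integral_add hmain htail, hinv, ← two_smul ℝ, smul_smul, inv_mul_cancel₀ two_ne_zero,
    one_smul]

end CauchySchlomilch

lemma integral_Ioi_exp_neg_mul_sq_add_div_sq {a b : ℝ} (ha : 0 < a) (hb : 0 < b) :
    ∫ x in Ioi 0, exp (-(a * x ^ 2 + b / x ^ 2)) = √(π / a) / 2 * exp (-2 * √(a * b)) := by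
  set c := √(b / a)
  have hc : 0 < c := sqrt_pos.2 (div_pos hb ha)
  have hac : a * c = √(a * b) := by
    rw [show a * b = a ^ 2 * (b / a) by field_simp, sqrt_mul (sq_nonneg a), sqrt_sq ha.le]
  -- completing the square: `a x² + b / x² = a (x - c / x)² + 2 √(a b)`
  have hsq : ∀ x ∈ Ioi (0 : ℝ),
      exp (-(a * x ^ 2 + b / x ^ 2)) = exp (-2 * √(a * b)) * exp (-a * (x - c / x) ^ 2) := by
    intro x (hx : 0 < x)
    rw [← exp_add, ← hac]
    have : a * c ^ 2 = b := by rw [sq_sqrt (div_pos hb ha).le]; field_simp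
    congr 1
    field_simp
    linear_combination this
  rw [setIntegral_congr_fun measurableSet_Ioi hsq, integral_const_mul,
    integral_Ioi_comp_sub_div_of_even hc (g := fun v => exp (-a * v ^ 2))
      (integrable_exp_neg_mul_sq ha) (fun v => by simp), integral_gaussian, smul_eq_mul]
  ring

lemma integral_Ioi_rpow_mul_exp_neg_mul_add_div {a b : ℝ} (ha : 0 < a) (hb : 0 < b) :
    ∫ t in Ioi 0, t ^ (-(3 / 2) : ℝ) * exp (-(b * t + a / t)) =
      √(π / a) * exp (-2 * √(a * b)) := by
  have hsubst : ∀ x ∈ Ioi (0 : ℝ), (|(-2 : ℝ)| * x ^ ((-2 : ℝ) - 1)) •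
      ((x ^ (-2 : ℝ)) ^ (-(3 / 2) : ℝ) * exp (-(b * x ^ (-2 : ℝ) + a / x ^ (-2 : ℝ)))) =
      2 * exp (-(a * x ^ 2 + b / x ^ 2)) := by
    intro x (hx : 0 < x)
    have h3 : (x ^ (-2 : ℝ)) ^ (-(3 / 2) : ℝ) = x ^ 3 := by
      rw [← rpow_mul hx.le]; norm_num
    have hm3 : x ^ ((-2 : ℝ) - 1) = (x ^ 3)⁻¹ := by
      rw [show (-2 : ℝ) - 1 = -(3 : ℕ) by norm_num, rpow_neg hx.le, rpow_natCast]
    have hm2 : x ^ (-2 : ℝ) = (x ^ 2)⁻¹ := by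
      rw [show (-2 : ℝ) = -(2 : ℕ) by norm_num, rpow_neg hx.le, rpow_natCast]
    rw [h3, hm3, hm2, smul_eq_mul, abs_of_neg (by norm_num : (-2 : ℝ) < 0)]
    field_simp
    ring_nf
  rw [← integral_comp_rpow_Ioi _ (show (-2 : ℝ) ≠ 0 by norm_num),
    setIntegral_congr_fun measurableSet_Ioi hsubst, integral_const_mul,
    integral_Ioi_exp_neg_mul_sq_add_div_sq ha hb]
  ring

lemma integral_Ioi_subordination_heatKernel {lam q : ℝ} (hlam : 0 < lam) (hq : 0 < q) :
    ∫ t in Ioi 0, t ^ (-(1 : ℝ) / 2) * exp (-lam * t) * ((4 * π * t)⁻¹ * exp (-q / (4 * t))) =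
      √π / (2 * π) * ((√q)⁻¹ * exp (-√lam * √q)) := by
  have hpow : ∀ t ∈ Ioi (0 : ℝ),
      t ^ (-(1 : ℝ) / 2) * exp (-lam * t) * ((4 * π * t)⁻¹ * exp (-q / (4 * t))) =
        (4 * π)⁻¹ * (t ^ (-(3 / 2) : ℝ) * exp (-(lam * t + (q / 4) / t))) := by
    intro t (ht : 0 < t)
    have : t ^ (-(3 / 2) : ℝ) = t ^ (-(1 : ℝ) / 2) * t⁻¹ := by
      rw [show (-(3 / 2) : ℝ) = -(1 : ℝ) / 2 - 1 by norm_num, rpow_sub ht, rpow_one,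
        div_eq_mul_inv]
    rw [this, neg_add, exp_add]
    field_simp
  have hsqrt : √(q / 4 * lam) = √q * √lam / 2 := by
    rw [sqrt_mul (by positivity), sqrt_div' _ (by norm_num : (0 : ℝ) ≤ 4),
      show (4 : ℝ) = 2 ^ 2 by norm_num, sqrt_sq (by norm_num)]
    ring
  have hsqrt' : √(π / (q / 4)) = 2 * √π / √q := by
    rw [sqrt_div' _ (by positivity), sqrt_div' _ (by norm_num : (0 : ℝ) ≤ 4),
      show (4 : ℝ) = 2 ^ 2 by norm_num, sqrt_sq (by norm_num)]
    field_simp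
  rw [setIntegral_congr_fun measurableSet_Ioi hpow, integral_const_mul,
    integral_Ioi_rpow_mul_exp_neg_mul_add_div (by positivity) hlam, hsqrt, hsqrt']
  have := sqrt_pos.2 hq
  field_simp
  ring

lemma tendsto_abs_intCast_cofinite : Tendsto (fun n : ℤ => |(n : ℝ)|) cofinite atTop := by
  rw [← cocompact_eq_cofinite]
  convert tendsto_norm_cocompact_atTop (E := ℤ) with n
  exact (Int.norm_eq_abs n).symm

lemma summable_inv_mul_exp_neg_mul_of_le {k a b : ℝ} (hk : 0 < k) (ha : 0 < a) {x : ℤ → ℝ}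
    (hx : ∀ n : ℤ, a * |(n : ℝ)| - b ≤ x n) :
    Summable fun n => (x n)⁻¹ * exp (-k * x n) := by
  set r := exp (-(k * a))
  have hgeom : Summable fun m : ℕ => r ^ m :=
    summable_geometric_of_lt_one (exp_pos _).le (exp_lt_one_iff.2 (by nlinarith))
  have hbound : Summable fun n : ℤ => exp (k * b) * r ^ n.natAbs :=
    (Summable.of_nat_of_neg (f := fun n : ℤ => r ^ n.natAbs) (by simpa using hgeom)
      (by simpa using hgeom)).mul_left _
  have hlarge : ∀ᶠ n : ℤ in cofinite, 1 ≤ x n := by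
    have hlin : Tendsto (fun n : ℤ => a * |(n : ℝ)| - b) cofinite atTop :=
      tendsto_atTop_add_const_right _ (-b) (tendsto_abs_intCast_cofinite.const_mul_atTop ha)
    exact (tendsto_atTop_mono hx hlin).eventually_ge_atTop 1
  refine Summable.of_norm_bounded_eventually hbound ?_
  filter_upwards [hlarge] with n hn
  rw [norm_mul, norm_inv, Real.norm_of_nonneg (by linarith), Real.norm_of_nonneg (exp_pos _).le]
  calc (x n)⁻¹ * exp (-k * x n) ≤ 1 * exp (-k * (a * |(n : ℝ)| - b)) :=
        mul_le_mul (inv_le_one_of_one_le₀ hn) (exp_le_exp.2 (by nlinarith [hx n]))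
          (exp_pos _).le zero_le_one
    _ = exp (k * b) * r ^ n.natAbs := by
        rw [← exp_nat_mul, ← exp_add, Nat.cast_natAbs, Int.cast_abs]
        ring_nf

lemma integral_Ioi_tsum_subordination_heatKernel {ι : Type*} [Countable ι] {lam : ℝ}
    (hlam : 0 < lam) {q : ι → ℝ} (hq : ∀ i, 0 < q i)
    (hsum : Summable fun i => (√(q i))⁻¹ * exp (-√lam * √(q i))) :
    ∫ t in Ioi 0, ∑' i,
        t ^ (-(1 : ℝ) / 2) * exp (-lam * t) * ((4 * π * t)⁻¹ * exp (-q i / (4 * t))) =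
      √π / (2 * π) * ∑' i, (√(q i))⁻¹ * exp (-√lam * √(q i)) := by
  have hval := fun i => integral_Ioi_subordination_heatKernel hlam (hq i)
  have hint : ∀ i, IntegrableOn
      (fun t => t ^ (-(1 : ℝ) / 2) * exp (-lam * t) * ((4 * π * t)⁻¹ * exp (-q i / (4 * t))))
      (Ioi 0) := fun i =>
    .of_integral_ne_zero <| by
      rw [hval]
      exact (mul_pos (by positivity) (mul_pos (inv_pos.2 (sqrt_pos.2 (hq i))) (exp_pos _))).ne'
  have hnorm : ∀ i, ∫ t in Ioi 0,
      ‖t ^ (-(1 : ℝ) / 2) * exp (-lam * t) * ((4 * π * t)⁻¹ * exp (-q i / (4 * t)))‖ =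
      √π / (2 * π) * ((√(q i))⁻¹ * exp (-√lam * √(q i))) := fun i => by
    rw [← hval]
    refine setIntegral_congr_fun measurableSet_Ioi fun t (ht : 0 < t) => ?_
    exact Real.norm_of_nonneg (by positivity)
  rw [← integral_tsum_of_summable_integral_norm hint
    (by simpa only [hnorm] using hsum.mul_left _), tsum_congr hval, tsum_mul_left]

lemma summable_inv_sqrt_mul_exp_neg {k : ℝ} (hk : 0 < k) (d s : ℝ) :
    Summable fun n : ℤ => (√(d ^ 2 + (s - 2 * n * π) ^ 2))⁻¹ *
      exp (-k * √(d ^ 2 + (s - 2 * n * π) ^ 2)) := by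
  refine summable_inv_mul_exp_neg_mul_of_le (b := |s|) hk two_pi_pos fun n => ?_
  calc 2 * π * |(n : ℝ)| - |s| ≤ |s - 2 * n * π| := by
        rw [abs_sub_comm, show 2 * π * |(n : ℝ)| = |2 * n * π| by
          rw [abs_mul, abs_mul, abs_two, abs_of_pos pi_pos]; ring]
        exact abs_sub_abs_le_abs_sub _ _
    _ ≤ √(d ^ 2 + (s - 2 * n * π) ^ 2) := by
        rw [← sqrt_sq_eq_abs]
        exact sqrt_le_sqrt (le_add_of_nonneg_left (sq_nonneg d))

lemma sq_add_sq_sub_two_mul_int_mul_pi_pos {w w' θ θ' : ℝ} (hθ : θ ∈ Ico (-π) π)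
    (hθ' : θ' ∈ Ico (-π) π) (hne : (w, θ) ≠ (w', θ')) (n : ℤ) :
    0 < (w - w') ^ 2 + (θ - θ' - 2 * n * π) ^ 2 := by
  by_contra! h
  obtain ⟨hw, hθn⟩ := (add_eq_zero_iff_of_nonneg (sq_nonneg _) (sq_nonneg _)).1
    (h.antisymm (by positivity))
  rw [sq_eq_zero_iff, sub_eq_zero] at hw hθn
  obtain ⟨h₁, h₂⟩ := hθ
  obtain ⟨h₁', h₂'⟩ := hθ'
  have hn : -1 < (n : ℝ) ∧ (n : ℝ) < 1 := ⟨by nlinarith [pi_pos], by nlinarith [pi_pos]⟩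
  obtain rfl : n = 0 := by
    have : -1 < n ∧ n < 1 := by exact_mod_cast hn
    omega
  exact hne (Prod.ext hw (by simpa [sub_eq_zero] using hθn))

/-- Explicit formula for the kernel of `(-∂_w² - Δ_{𝕊¹} + λ)^{-1/2}` on the
cylinder `ℝ × 𝕊¹`, obtained from the subordination formula applied to the heat
kernel `e^{t(∂_w² + Δ_{𝕊¹})} = (4πt)^{-1} e^{-(w-w')²/(4t)} Σ_n e^{-(θ-θ'-2nπ)²/(4t)}`:
`(1/Γ(1/2)) ∫_0^∞ t^{-1/2} e^{-λt} (4πt)^{-1} e^{-(w-w')²/(4t)}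
  Σ_n e^{-(θ-θ'-2nπ)²/(4t)} dt = (1/2π) Σ_n ρ_n⁻¹ e^{-√λ ρ_n}`,
where `ρ_n = √((w-w')² + (θ-θ'-2nπ)²)`. -/
theorem cylinder_resolvent_kernel (lam : ℝ) (hlam : 0 < lam) (w w' θ θ' : ℝ)
    (hθ : θ ∈ Set.Ico (-π) π) (hθ' : θ' ∈ Set.Ico (-π) π)
    (hne : (w, θ) ≠ (w', θ')) :
    (1 / Real.Gamma (1 / 2)) *
      ∫ t in Set.Ioi (0 : ℝ),
        t ^ (-(1 : ℝ) / 2) * Real.exp (-lam * t) *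
          ((4 * π * t)⁻¹ * Real.exp (-(w - w') ^ 2 / (4 * t))) *
          ∑' n : ℤ, Real.exp (-(θ - θ' - 2 * (n : ℝ) * π) ^ 2 / (4 * t)) =
    (1 / (2 * π)) *
      ∑' n : ℤ,
        (Real.sqrt ((w - w') ^ 2 + (θ - θ' - 2 * (n : ℝ) * π) ^ 2))⁻¹ *
          Real.exp (-Real.sqrt lam *
            Real.sqrt ((w - w') ^ 2 + (θ - θ' - 2 * (n : ℝ) * π) ^ 2)) := by
  have hintegrand : (fun t : ℝ => t ^ (-(1 : ℝ) / 2) * exp (-lam * t) *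
      ((4 * π * t)⁻¹ * exp (-(w - w') ^ 2 / (4 * t))) *
      ∑' n : ℤ, exp (-(θ - θ' - 2 * (n : ℝ) * π) ^ 2 / (4 * t))) =
      fun t => ∑' n : ℤ, t ^ (-(1 : ℝ) / 2) * exp (-lam * t) *
        ((4 * π * t)⁻¹ * exp (-((w - w') ^ 2 + (θ - θ' - 2 * n * π) ^ 2) / (4 * t))) := by
    ext t
    rw [← tsum_mul_left]
    refine tsum_congr fun n => ?_
    rw [neg_add, add_div, exp_add]
    ring
  rw [hintegrand, integral_Ioi_tsum_subordination_heatKernel hlam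
    (sq_add_sq_sub_two_mul_int_mul_pi_pos hθ hθ' hne)
    (summable_inv_sqrt_mul_exp_neg (sqrt_pos.2 hlam) _ _), Gamma_one_half_eq, ← mul_assoc]
  congr 1
  field_simp
end

section
/- Let a > 0 and ε > 0. There exists a constant C > 0, independent of t and θ, such that for all t > 0 and all θ ∈ ℝ, |∫_{−∞}^{∞} e^{iθξ} e^{−(ξ² − 2aξ²/√(ξ²+ε)) t} dξ| ≤ C t^{−1/2} e^{a²t}. -/
/-!
Since `√(ξ² + ε) ≥ |ξ|`, the exponent satisfies
`ξ² - 2aξ²/√(ξ² + ε) ≥ ξ² - 2|a||ξ| = (|ξ| - |a|)² - a²`, so the modulus of the integrand is at most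
`e^{a²t} e^{-t(|ξ| - |a|)²} ≤ e^{a²t} (e^{-t(ξ - |a|)²} + e^{-t(ξ + |a|)²})`.
Each of the two shifted Gaussians integrates to `√(π/t)`, giving the bound with `C = 2√π`.
-/

open MeasureTheory Real

lemma sq_div_sqrt_sq_add_le_abs {ε : ℝ} (hε : 0 ≤ ε) (ξ : ℝ) : ξ ^ 2 / √(ξ ^ 2 + ε) ≤ |ξ| := by
  refine div_le_of_le_mul₀ (sqrt_nonneg _) (abs_nonneg ξ) ?_
  calc ξ ^ 2 = |ξ| * |ξ| := by rw [← sq, sq_abs]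
    _ ≤ |ξ| * √(ξ ^ 2 + ε) := by gcongr; exact abs_le_sqrt (by linarith)

lemma neg_mul_sub_two_mul_sq_div_sqrt_le {ε t : ℝ} (hε : 0 ≤ ε) (ht : 0 ≤ t) (a ξ : ℝ) :
    -((ξ ^ 2 - 2 * a * ξ ^ 2 / √(ξ ^ 2 + ε)) * t) ≤ a ^ 2 * t + -t * (|ξ| - |a|) ^ 2 := by
  have hdamp : 2 * a * ξ ^ 2 / √(ξ ^ 2 + ε) ≤ 2 * |a| * |ξ| := by
    rw [mul_div_assoc, mul_assoc 2 a, mul_assoc 2 |a|]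
    gcongr 2 * ?_
    calc a * (ξ ^ 2 / √(ξ ^ 2 + ε)) ≤ |a| * (ξ ^ 2 / √(ξ ^ 2 + ε)) := by
          gcongr
          exact le_abs_self a
      _ ≤ |a| * |ξ| := by gcongr; exact sq_div_sqrt_sq_add_le_abs hε ξ
  nlinarith [mul_le_mul_of_nonneg_right hdamp ht, sq_abs ξ, sq_abs a]

lemma exp_neg_mul_sq_abs_sub_le (t b ξ : ℝ) :
    rexp (-t * (|ξ| - b) ^ 2) ≤ rexp (-t * (ξ - b) ^ 2) + rexp (-t * (ξ + b) ^ 2) := by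
  rcases le_or_gt 0 ξ with hξ | hξ
  · rw [abs_of_nonneg hξ]
    exact le_add_of_nonneg_right (exp_pos _).le
  · rw [abs_of_neg hξ, show -t * (-ξ - b) ^ 2 = -t * (ξ + b) ^ 2 by ring]
    exact le_add_of_nonneg_left (exp_pos _).le

lemma integrable_exp_neg_mul_sq_sub_add {t : ℝ} (ht : 0 < t) (b : ℝ) :
    Integrable fun ξ : ℝ ↦ rexp (-t * (ξ - b) ^ 2) + rexp (-t * (ξ + b) ^ 2) :=
  ((integrable_exp_neg_mul_sq ht).comp_sub_right b).add
    ((integrable_exp_neg_mul_sq ht).comp_add_right b)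

lemma integral_exp_neg_mul_sq_sub_add {t : ℝ} (ht : 0 < t) (b : ℝ) :
    ∫ ξ : ℝ, (rexp (-t * (ξ - b) ^ 2) + rexp (-t * (ξ + b) ^ 2)) = 2 * √(π / t) := by
  rw [integral_add ((integrable_exp_neg_mul_sq ht).comp_sub_right b)
      ((integrable_exp_neg_mul_sq ht).comp_add_right b),
    integral_sub_right_eq_self (fun x ↦ rexp (-t * x ^ 2)) b,
    integral_add_right_eq_self (fun x ↦ rexp (-t * x ^ 2)) b, integral_gaussian, two_mul]

lemma norm_exp_mul_exp_phase_le {ε t : ℝ} (hε : 0 ≤ ε) (ht : 0 ≤ t) (a θ ξ : ℝ) :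
    ‖Complex.exp (Complex.I * θ * ξ) *
        Complex.exp (-(((ξ ^ 2 - 2 * a * ξ ^ 2 / √(ξ ^ 2 + ε)) * t : ℝ) : ℂ))‖ ≤
      rexp (a ^ 2 * t) * (rexp (-t * (ξ - |a|) ^ 2) + rexp (-t * (ξ + |a|) ^ 2)) := by
  rw [norm_mul, show Complex.I * θ * ξ = ((θ * ξ : ℝ) : ℂ) * Complex.I by push_cast; ring,
    Complex.norm_exp_ofReal_mul_I, one_mul, ← Complex.ofReal_neg, Complex.norm_exp_ofReal]
  calc rexp (-((ξ ^ 2 - 2 * a * ξ ^ 2 / √(ξ ^ 2 + ε)) * t))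
      ≤ rexp (a ^ 2 * t) * rexp (-t * (|ξ| - |a|) ^ 2) := by
        rw [← exp_add]
        exact exp_le_exp.2 (neg_mul_sub_two_mul_sq_div_sqrt_le hε ht a ξ)
    _ ≤ rexp (a ^ 2 * t) * (rexp (-t * (ξ - |a|) ^ 2) + rexp (-t * (ξ + |a|) ^ 2)) := by
        gcongr
        exact exp_neg_mul_sq_abs_sub_le t |a| ξ

theorem oscillatory_integral_bound_one_general (a ε : ℝ) (hε : 0 < ε) :
    ∃ C > 0, ∀ t : ℝ, 0 < t → ∀ θ : ℝ,
      ‖∫ ξ : ℝ, Complex.exp (Complex.I * (θ : ℂ) * (ξ : ℂ)) *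
          Complex.exp (-(((ξ ^ 2 - 2 * a * ξ ^ 2 / Real.sqrt (ξ ^ 2 + ε)) * t : ℝ) : ℂ))‖ ≤
        C * t ^ (-(1 : ℝ) / 2) * Real.exp (a ^ 2 * t) := by
  refine ⟨2 * √π, by positivity, fun t ht θ ↦ ?_⟩
  have hrpow : t ^ (-(1 : ℝ) / 2) = (√t)⁻¹ := by
    rw [neg_div, rpow_neg ht.le, sqrt_eq_rpow]
  calc _ ≤ ∫ ξ : ℝ, rexp (a ^ 2 * t) *
          (rexp (-t * (ξ - |a|) ^ 2) + rexp (-t * (ξ + |a|) ^ 2)) :=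
        norm_integral_le_of_norm_le ((integrable_exp_neg_mul_sq_sub_add ht |a|).const_mul _)
          (.of_forall (norm_exp_mul_exp_phase_le hε.le ht.le a θ))
    _ = 2 * √π * t ^ (-(1 : ℝ) / 2) * rexp (a ^ 2 * t) := by
        rw [integral_const_mul, integral_exp_neg_mul_sq_sub_add ht, hrpow,
          sqrt_div pi_nonneg, div_eq_mul_inv]
        ring

/-- For `a > 0` and `ε > 0` there exists `C > 0`, independent of `t` and `θ`,
such that for all `t > 0` and `θ ∈ ℝ`:
`|∫_ℝ e^{iθξ} e^{-(ξ² - 2aξ²/√(ξ²+ε)) t} dξ| ≤ C t^{-1/2} e^{a²t}`. -/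
theorem oscillatory_integral_bound_one (a ε : ℝ) (ha : 0 < a) (hε : 0 < ε) :
    ∃ C > 0, ∀ t : ℝ, 0 < t → ∀ θ : ℝ,
      ‖∫ ξ : ℝ, Complex.exp (Complex.I * (θ : ℂ) * (ξ : ℂ)) *
          Complex.exp (-(((ξ ^ 2 - 2 * a * ξ ^ 2 / Real.sqrt (ξ ^ 2 + ε)) * t : ℝ) : ℂ))‖ ≤
        C * t ^ (-(1 : ℝ) / 2) * Real.exp (a ^ 2 * t) :=
  oscillatory_integral_bound_one_general a ε hε
end

section
/- Let 0 < a ≤ 1/2, ε > 0, and set ε₁ = 1 − 2a/√(1+ε) > 0. Then there exists a constant C = C(ε, a) > 0 such that for all t > 0 and all θ, θ' with |θ − θ'| ≤ π, |k_a(t, θ − θ') − h(t, θ − θ')| ≤ C (1 + t) e^{−ε₁ t}, where k_a(t, φ) = (1/2π) Σ_{n∈ℤ} e^{−(n² − 2an²/√(n²+ε)) t} e^{inφ} and h(t, φ) = (1/2π) Σ_{n∈ℤ} e^{−n² t} e^{inφ}. -/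
open MeasureTheory Real

/-- The heat kernel of the operator `T_a = -Σ_n (n² - 2an²/√(n²+ε)) P_n` on
`L²(𝕊¹)`: `k_a(t, φ) = (1/2π) Σ_{n∈ℤ} e^{-(n² - 2an²/√(n²+ε)) t} e^{inφ}`. -/
noncomputable def heatKernelTa (a ε t φ : ℝ) : ℂ :=
  (1 / (2 * (π : ℂ))) * ∑' n : ℤ,
    Complex.exp (-((((n : ℝ) ^ 2 - 2 * a * (n : ℝ) ^ 2 / Real.sqrt ((n : ℝ) ^ 2 + ε)) * t : ℝ) : ℂ)) *
      Complex.exp (Complex.I * (n : ℂ) * (φ : ℂ))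

/-- The heat kernel of the Laplace–Beltrami operator `Δ_{𝕊¹} = ∂_θ²` on the
unit circle: `h(t, φ) = (1/2π) Σ_{n∈ℤ} e^{-n² t} e^{inφ}`. -/
noncomputable def heatKernelCircle (t φ : ℝ) : ℂ :=
  (1 / (2 * (π : ℂ))) * ∑' n : ℤ,
    Complex.exp (-(((n : ℝ) ^ 2 * t : ℝ) : ℂ)) * Complex.exp (Complex.I * (n : ℂ) * (φ : ℂ))

/-!
The eigenvalues `λₙ = n² - 2an²/√(n²+ε)` of `-T_a` satisfy `0 ≤ n² - λₙ ≤ 2a|n|`, and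
`λₙ ≥ ε₁ n²` because `√(n²+ε) ≥ √(1+ε)` for `n ≠ 0`. So the `n`-th Fourier coefficients of the two
kernels differ by at most `(n² - λₙ) t e^{-λₙ t} ≤ 2a|n| t e^{-ε₁ n² t}`, and with `y = e^{-ε₁ t}`
the sum `∑ₙ |n| y^{n²}` is at most `2y/(1-y) ≤ 2 e^{-ε₁ t} (1 + 1/(ε₁ t))`.
-/

open Finset Complex

theorem HasSum.comp_natAbs {G : Type*} [AddCommGroup G] [TopologicalSpace G]
    [IsTopologicalAddGroup G] {u : ℕ → G} {s : G} (hu : HasSum u s) :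
    HasSum (fun n : ℤ ↦ u n.natAbs) (s + s - u 0) :=
  HasSum.of_nat_of_neg (by simpa using hu) (by simpa using hu)

section PowSq

variable {y : ℝ}

lemma summable_pow_sq (hy0 : 0 ≤ y) (hy1 : y < 1) : Summable fun m : ℕ ↦ y ^ (m ^ 2) :=
  (summable_geometric_of_lt_one hy0 hy1).of_nonneg_of_le (fun _ ↦ by positivity)
    fun m ↦ pow_le_pow_of_le_one hy0 hy1.le (Nat.le_self_pow two_ne_zero m)

/-- Each term `m y^{m²}` is dominated by the `2m - 1 ≥ m` terms `y^k` with `(m-1)² < k ≤ m²`. -/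
lemma sum_range_succ_mul_pow_sq_le (hy0 : 0 ≤ y) (hy1 : y ≤ 1) (N : ℕ) :
    ∑ m ∈ range (N + 1), (m : ℝ) * y ^ (m ^ 2) ≤ ∑ k ∈ range (N ^ 2), y ^ (k + 1) := by
  induction N with
  | zero => simp
  | succ N ih =>
    have hsq : N ^ 2 ≤ (N + 1) ^ 2 := Nat.pow_le_pow_left N.le_succ 2
    rw [sum_range_succ, ← sum_range_add_sum_Ico _ hsq]
    refine add_le_add ih ?_
    have hcard : #(Ico (N ^ 2) ((N + 1) ^ 2)) = 2 * N + 1 := by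
      rw [Nat.card_Ico]; ring_nf; omega
    calc ((N + 1 : ℕ) : ℝ) * y ^ ((N + 1) ^ 2)
        ≤ #(Ico (N ^ 2) ((N + 1) ^ 2)) • y ^ ((N + 1) ^ 2) := by
          rw [hcard, nsmul_eq_mul]; gcongr; linarith [(N.cast_nonneg : (0 : ℝ) ≤ N)]
      _ ≤ ∑ k ∈ Ico (N ^ 2) ((N + 1) ^ 2), y ^ (k + 1) :=
          card_nsmul_le_sum _ _ _ fun k hk ↦ pow_le_pow_of_le_one hy0 hy1 (mem_Ico.1 hk).2

lemma sum_range_mul_pow_sq_le (hy0 : 0 ≤ y) (hy1 : y < 1) (N : ℕ) :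
    ∑ m ∈ range N, (m : ℝ) * y ^ (m ^ 2) ≤ y / (1 - y) := by
  have hgeom : HasSum (fun k : ℕ ↦ y ^ (k + 1)) (y / (1 - y)) := by
    simpa only [pow_succ', div_eq_mul_inv] using
      (hasSum_geometric_of_lt_one hy0 hy1).mul_left y
  calc ∑ m ∈ range N, (m : ℝ) * y ^ (m ^ 2)
      ≤ ∑ m ∈ range (N + 1), (m : ℝ) * y ^ (m ^ 2) :=
        sum_le_sum_of_subset_of_nonneg (range_subset_range.2 N.le_succ) fun _ _ _ ↦ by positivity
    _ ≤ ∑ k ∈ range (N ^ 2), y ^ (k + 1) := sum_range_succ_mul_pow_sq_le hy0 hy1.le N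
    _ ≤ y / (1 - y) := sum_le_hasSum _ (fun _ _ ↦ by positivity) hgeom

lemma summable_mul_pow_sq (hy0 : 0 ≤ y) (hy1 : y < 1) :
    Summable fun m : ℕ ↦ (m : ℝ) * y ^ (m ^ 2) :=
  summable_of_sum_range_le (fun _ ↦ by positivity) (sum_range_mul_pow_sq_le hy0 hy1)

lemma tsum_mul_pow_sq_le (hy0 : 0 ≤ y) (hy1 : y < 1) :
    ∑' m : ℕ, (m : ℝ) * y ^ (m ^ 2) ≤ y / (1 - y) :=
  Real.tsum_le_of_sum_range_le (fun _ ↦ by positivity) (sum_range_mul_pow_sq_le hy0 hy1)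

end PowSq

lemma exp_neg_mul_int_sq (c : ℝ) (n : ℤ) : rexp (-c * n ^ 2) = rexp (-c) ^ (n.natAbs ^ 2) := by
  rw [← Real.exp_nat_mul]
  push_cast [Nat.cast_natAbs, Int.cast_abs, sq_abs]
  ring_nf

lemma abs_mul_exp_neg_mul_int_sq (c : ℝ) (n : ℤ) :
    |(n : ℝ)| * rexp (-c * n ^ 2) = (n.natAbs : ℝ) * rexp (-c) ^ (n.natAbs ^ 2) := by
  rw [exp_neg_mul_int_sq, Nat.cast_natAbs, Int.cast_abs]

section GaussianSum

variable {c : ℝ}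

lemma exp_neg_lt_one (hc : 0 < c) : rexp (-c) < 1 :=
  Real.exp_lt_one_iff.2 (neg_neg_of_pos hc)

lemma exp_neg_div_one_sub_exp_neg_le (hc : 0 < c) :
    rexp (-c) / (1 - rexp (-c)) ≤ rexp (-c) * (1 + 1 / c) := by
  have hy : rexp (-c) * (c + 1) ≤ 1 := by
    calc rexp (-c) * (c + 1) ≤ rexp (-c) * rexp c := by gcongr; exact Real.add_one_le_exp c
      _ = 1 := by rw [← Real.exp_add, neg_add_cancel, Real.exp_zero]
  have h1 : 0 < 1 - rexp (-c) := sub_pos.2 (exp_neg_lt_one hc)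
  rw [div_le_iff₀ h1]
  have : 0 < rexp (-c) := Real.exp_pos _
  field_simp
  nlinarith

lemma summable_exp_neg_mul_int_sq (hc : 0 < c) : Summable fun n : ℤ ↦ rexp (-c * n ^ 2) := by
  simp_rw [exp_neg_mul_int_sq]
  exact (summable_pow_sq (Real.exp_pos _).le (exp_neg_lt_one hc)).hasSum.comp_natAbs.summable

lemma hasSum_abs_mul_exp_neg_mul_int_sq (hc : 0 < c) :
    HasSum (fun n : ℤ ↦ |(n : ℝ)| * rexp (-c * n ^ 2))
      (2 * ∑' m : ℕ, (m : ℝ) * rexp (-c) ^ (m ^ 2)) := by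
  have h := (summable_mul_pow_sq (Real.exp_pos (-c)).le (exp_neg_lt_one hc)).hasSum.comp_natAbs
  simp_rw [abs_mul_exp_neg_mul_int_sq, two_mul]
  simpa using h

lemma tsum_abs_mul_exp_neg_mul_int_sq_le (hc : 0 < c) :
    ∑' n : ℤ, |(n : ℝ)| * rexp (-c * n ^ 2) ≤ 2 * rexp (-c) * (1 + 1 / c) := by
  rw [(hasSum_abs_mul_exp_neg_mul_int_sq hc).tsum_eq, mul_assoc]
  gcongr
  exact (tsum_mul_pow_sq_le (Real.exp_pos _).le (exp_neg_lt_one hc)).trans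
    (exp_neg_div_one_sub_exp_neg_le hc)

end GaussianSum

/-- `-T_a` acts on `e^{inθ}` as multiplication by `eigenvalueTa a ε n`. -/
noncomputable def eigenvalueTa (a ε x : ℝ) : ℝ := x ^ 2 - 2 * a * x ^ 2 / √(x ^ 2 + ε)

section Eigenvalue

variable {a ε : ℝ}

lemma eigenvalueTa_le_sq (ha : 0 ≤ a) (x : ℝ) : eigenvalueTa a ε x ≤ x ^ 2 := by
  unfold eigenvalueTa
  have : 0 ≤ 2 * a * x ^ 2 / √(x ^ 2 + ε) := by positivity
  linarith

lemma sq_sub_eigenvalueTa_le (ha : 0 ≤ a) (hε : 0 ≤ ε) (x : ℝ) :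
    x ^ 2 - eigenvalueTa a ε x ≤ 2 * a * |x| := by
  have habs : |x| ≤ √(x ^ 2 + ε) := Real.abs_le_sqrt (by linarith)
  have hdiv : x ^ 2 / √(x ^ 2 + ε) ≤ |x| :=
    div_le_of_le_mul₀ (Real.sqrt_nonneg _) (abs_nonneg x) <| by
      nlinarith [abs_nonneg x, sq_abs x]
  calc x ^ 2 - eigenvalueTa a ε x = 2 * a * (x ^ 2 / √(x ^ 2 + ε)) := by
        unfold eigenvalueTa; ring
    _ ≤ 2 * a * |x| := by gcongr

lemma mul_sq_le_eigenvalueTa (ha : 0 ≤ a) (hε : 0 < 1 + ε) {x : ℝ} (hx : 1 ≤ x ^ 2) :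
    (1 - 2 * a / √(1 + ε)) * x ^ 2 ≤ eigenvalueTa a ε x := by
  have hsqrt : √(1 + ε) ≤ √(x ^ 2 + ε) := Real.sqrt_le_sqrt (by linarith)
  have : 2 * a / √(x ^ 2 + ε) ≤ 2 * a / √(1 + ε) := by
    gcongr
  calc (1 - 2 * a / √(1 + ε)) * x ^ 2 ≤ (1 - 2 * a / √(x ^ 2 + ε)) * x ^ 2 := by gcongr
    _ = eigenvalueTa a ε x := by unfold eigenvalueTa; ring

lemma mul_sq_le_eigenvalueTa_int (ha : 0 ≤ a) (hε : 0 < 1 + ε) (n : ℤ) :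
    (1 - 2 * a / √(1 + ε)) * (n : ℝ) ^ 2 ≤ eigenvalueTa a ε n := by
  rcases eq_or_ne n 0 with rfl | hn
  · simp [eigenvalueTa]
  · exact mul_sq_le_eigenvalueTa ha hε <|
      (one_le_sq_iff_one_le_abs _).2 (by exact_mod_cast Int.one_le_abs hn)

lemma exp_neg_sub_exp_neg_le (x y : ℝ) : rexp (-x) - rexp (-y) ≤ (y - x) * rexp (-x) := by
  have h : rexp (-y) = rexp (-x) * rexp (x - y) := by rw [← Real.exp_add]; ring_nf
  rw [h]
  nlinarith [Real.add_one_le_exp (x - y), Real.exp_pos (-x)]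

lemma norm_cexp_I_mul_int_mul (n : ℤ) (φ : ℝ) : ‖cexp (I * n * φ)‖ = 1 := by
  simp [Complex.norm_exp]

lemma norm_cexp_neg_ofReal_mul {w : ℂ} (hw : ‖w‖ = 1) (x : ℝ) :
    ‖cexp (-(x : ℂ)) * w‖ = rexp (-x) := by
  simp [Complex.norm_exp, hw]

lemma norm_cexp_neg_ofReal_mul_sub {w : ℂ} (hw : ‖w‖ = 1) (x y : ℝ) :
    ‖cexp (-(x : ℂ)) * w - cexp (-(y : ℂ)) * w‖ = |rexp (-x) - rexp (-y)| := by
  rw [← sub_mul, norm_mul, hw, mul_one, ← Complex.ofReal_neg, ← Complex.ofReal_neg,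
    ← Complex.ofReal_exp, ← Complex.ofReal_exp, ← Complex.ofReal_sub, Complex.norm_real,
    Real.norm_eq_abs]

section HeatKernel

variable {a ε t : ℝ}

lemma abs_exp_neg_eigenvalueTa_sub_le (ha : 0 ≤ a) (hε : 0 ≤ ε) (ht : 0 ≤ t) (n : ℤ) :
    |rexp (-(eigenvalueTa a ε n * t)) - rexp (-((n : ℝ) ^ 2 * t))| ≤
      2 * a * t * (|(n : ℝ)| * rexp (-((1 - 2 * a / √(1 + ε)) * t) * n ^ 2)) := by
  have hle : eigenvalueTa a ε n * t ≤ (n : ℝ) ^ 2 * t := by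
    gcongr; exact eigenvalueTa_le_sq ha _
  have hgap := sq_sub_eigenvalueTa_le ha hε (n : ℝ)
  have hlow := mul_sq_le_eigenvalueTa_int (ε := ε) ha (by linarith) n
  rw [abs_of_nonneg (sub_nonneg.2 (Real.exp_le_exp.2 (neg_le_neg hle)))]
  calc _ ≤ ((n : ℝ) ^ 2 * t - eigenvalueTa a ε n * t) * rexp (-(eigenvalueTa a ε n * t)) :=
        exp_neg_sub_exp_neg_le _ _
    _ ≤ (2 * a * |(n : ℝ)| * t) * rexp (-((1 - 2 * a / √(1 + ε)) * t) * n ^ 2) := by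
        gcongr
        · rw [← sub_mul]; gcongr
        · nlinarith
    _ = _ := by ring

lemma norm_heatKernelTa_sub_heatKernelCircle_le_tsum (ha : 0 ≤ a) (hε : 0 ≤ ε)
    (hε₁ : 0 < 1 - 2 * a / √(1 + ε)) (ht : 0 < t) (φ : ℝ) :
    ‖heatKernelTa a ε t φ - heatKernelCircle t φ‖ ≤
      2 * a * t * ∑' n : ℤ, |(n : ℝ)| * rexp (-((1 - 2 * a / √(1 + ε)) * t) * n ^ 2) := by
  set w : ℤ → ℂ := fun n ↦ cexp (I * n * φ)
  set f : ℤ → ℂ := fun n ↦ cexp (-((eigenvalueTa a ε n * t : ℝ) : ℂ)) * w n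
  set g : ℤ → ℂ := fun n ↦ cexp (-(((n : ℝ) ^ 2 * t : ℝ) : ℂ)) * w n
  have hw (n : ℤ) : ‖w n‖ = 1 := norm_cexp_I_mul_int_mul n φ
  have hfg (n : ℤ) : ‖f n - g n‖ ≤
      2 * a * t * (|(n : ℝ)| * rexp (-((1 - 2 * a / √(1 + ε)) * t) * n ^ 2)) := by
    rw [norm_cexp_neg_ofReal_mul_sub (hw n)]
    exact abs_exp_neg_eigenvalueTa_sub_le ha hε ht.le n
  have hB := (hasSum_abs_mul_exp_neg_mul_int_sq (mul_pos hε₁ ht)).summable.mul_left (2 * a * t)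
  have hg : Summable g := (summable_exp_neg_mul_int_sq ht).of_norm_bounded fun n ↦ by
    rw [norm_cexp_neg_ofReal_mul (hw n), neg_mul, mul_comm]
  have hf : Summable f := by simpa using (hB.of_norm_bounded hfg).add hg
  have hπ : ‖1 / (2 * (π : ℂ))‖ ≤ 1 := by
    rw [norm_div, norm_one, norm_mul, Complex.norm_ofNat, Complex.norm_real,
      Real.norm_of_nonneg pi_pos.le, div_le_one (by positivity)]
    linarith [pi_gt_three]
  calc ‖heatKernelTa a ε t φ - heatKernelCircle t φ‖
      = ‖1 / (2 * (π : ℂ))‖ * ‖∑' n, (f n - g n)‖ := by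
        rw [hf.tsum_sub hg, ← norm_mul, mul_sub]; rfl
    _ ≤ 1 * ∑' n : ℤ, 2 * a * t *
          (|(n : ℝ)| * rexp (-((1 - 2 * a / √(1 + ε)) * t) * n ^ 2)) := by
        gcongr
        exact tsum_of_norm_bounded hB.hasSum hfg
    _ = _ := by rw [one_mul, tsum_mul_left]

end HeatKernel

/-- Comparison of the heat kernels of `T_a` and of `Δ_{𝕊¹}`: for `0 < a ≤ 1/2`
and `ε > 0`, with `ε₁ = 1 - 2a/√(1+ε) > 0`, there is `C = C(ε, a) > 0` with
`|k_a(t, θ-θ') - h(t, θ-θ')| ≤ C (1 + t) e^{-ε₁ t}` for all `t > 0` and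
`|θ - θ'| ≤ π`. -/
theorem heat_kernel_comparison (a ε : ℝ) (ha0 : 0 < a) (ha1 : a ≤ 1 / 2) (hε : 0 < ε) :
    0 < 1 - 2 * a / Real.sqrt (1 + ε) ∧
    ∃ C > 0, ∀ t : ℝ, 0 < t → ∀ θ θ' : ℝ, |θ - θ'| ≤ π →
      ‖heatKernelTa a ε t (θ - θ') - heatKernelCircle t (θ - θ')‖ ≤
        C * (1 + t) * Real.exp (-(1 - 2 * a / Real.sqrt (1 + ε)) * t) := by
  set ε₁ := 1 - 2 * a / √(1 + ε)
  have hε₁ : 0 < ε₁ := by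
    have : 1 < √(1 + ε) := Real.lt_sqrt_of_sq_lt (by linarith)
    rw [sub_pos, div_lt_one (by positivity)]
    linarith
  refine ⟨hε₁, 4 * a * (1 + 1 / ε₁), by positivity, fun t ht θ θ' _ ↦ ?_⟩
  calc ‖heatKernelTa a ε t (θ - θ') - heatKernelCircle t (θ - θ')‖
      ≤ 2 * a * t * ∑' n : ℤ, |(n : ℝ)| * rexp (-(ε₁ * t) * n ^ 2) :=
        norm_heatKernelTa_sub_heatKernelCircle_le_tsum ha0.le hε.le hε₁ ht _
    _ ≤ 2 * a * t * (2 * rexp (-(ε₁ * t)) * (1 + 1 / (ε₁ * t))) := by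
        gcongr
        exact tsum_abs_mul_exp_neg_mul_int_sq_le (mul_pos hε₁ ht)
    _ = 4 * a * (t + 1 / ε₁) * rexp (-ε₁ * t) := by
        rw [neg_mul]; field_simp; ring
    _ ≤ 4 * a * (1 + 1 / ε₁) * (1 + t) * rexp (-ε₁ * t) := by
        have : t + 1 / ε₁ ≤ (1 + 1 / ε₁) * (1 + t) := by nlinarith [div_pos one_pos hε₁]
        rw [mul_assoc (4 * a) (1 + 1 / ε₁)]
        gcongr
end Eigenvalue
end

section
/- Let 0 < a ≤ 1/2, λ > −a², 0 < ε < (λ + a²)/a, and 0 < λ' < λ + a² − aε. Then for every integer n, n² − 2a n²/√(n² + ε) + λ' ≤ (n − a)² + λ. Equivalently, a² − 2an + 2a n²/√(n² + ε) + λ − λ' ≥ 0 for all n ∈ ℤ; in particular, for every ε > 0 and every integer n ≥ 1, n²/√(n² + ε) − n > −ε/2. -/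
open Real

/-! For `n ≤ 0` every term of `a² - 2an + 2an²/√(n²+ε)` is nonnegative. For `n ≥ 1`, writing
`s = √(n²+ε)`, one has `n²/s - n = -nε/(s(s+n))`, and `s(s+n) > 2n² ≥ 2n` shows that this
exceeds `-ε/2`; so the left side stays above `a² - aε`, which beats `λ' - λ`. -/

lemma neg_half_lt_sq_div_sqrt_add_sub {ε x : ℝ} (hε : 0 < ε) (hx : 1 ≤ x) :
    -ε / 2 < x ^ 2 / √(x ^ 2 + ε) - x := by
  set s := √(x ^ 2 + ε)
  have hs2 : s ^ 2 = x ^ 2 + ε := sq_sqrt (by positivity)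
  have hxs : x < s := lt_sqrt (by linarith) |>.2 (by linarith)
  have hs0 : 0 < s := by linarith
  have hdiff : x ^ 2 / s - x = -(x * ε) / (s * (s + x)) := by
    field_simp
    linear_combination -hs2
  have hden : 2 * x < s * (s + x) := by nlinarith
  rw [hdiff, neg_div, neg_div, neg_lt_neg_iff, div_lt_div_iff₀ (by positivity) (by positivity)]
  nlinarith [mul_lt_mul_of_pos_left hden hε]

lemma neg_mul_le_two_mul_sq_div_sqrt_add_sub {a ε : ℝ} (ha : 0 ≤ a) (hε : 0 < ε) (n : ℤ) :
    -(a * ε) ≤ 2 * a * (n : ℝ) ^ 2 / √((n : ℝ) ^ 2 + ε) - 2 * a * n := by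
  rcases le_or_gt n 0 with hn | hn
  · have hn' : (n : ℝ) ≤ 0 := by exact_mod_cast hn
    have hquot : 0 ≤ 2 * a * (n : ℝ) ^ 2 / √((n : ℝ) ^ 2 + ε) := by positivity
    nlinarith
  · have hn' : (1 : ℝ) ≤ n := by exact_mod_cast hn
    have key := neg_half_lt_sq_div_sqrt_add_sub hε hn'
    rw [mul_div_assoc]
    nlinarith

theorem fourier_mode_inequality_general (a lam ε lam' : ℝ) (ha0 : 0 < a) (hε0 : 0 < ε)
    (hl1 : lam' < lam + a ^ 2 - a * ε) :
    (∀ n : ℤ,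
      (n : ℝ) ^ 2 - 2 * a * (n : ℝ) ^ 2 / Real.sqrt ((n : ℝ) ^ 2 + ε) + lam' ≤
        ((n : ℝ) - a) ^ 2 + lam) ∧
    (∀ n : ℤ,
      0 ≤ a ^ 2 - 2 * a * (n : ℝ) +
        2 * a * (n : ℝ) ^ 2 / Real.sqrt ((n : ℝ) ^ 2 + ε) + lam - lam') ∧
    (∀ ε' : ℝ, 0 < ε' → ∀ n : ℤ, 1 ≤ n →
      -ε' / 2 < (n : ℝ) ^ 2 / Real.sqrt ((n : ℝ) ^ 2 + ε') - (n : ℝ)) := by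
  have hmode (n : ℤ) : 0 ≤ a ^ 2 - 2 * a * (n : ℝ) +
      2 * a * (n : ℝ) ^ 2 / Real.sqrt ((n : ℝ) ^ 2 + ε) + lam - lam' := by
    linarith [neg_mul_le_two_mul_sq_div_sqrt_add_sub ha0.le hε0 n]
  refine ⟨fun n => ?_, hmode, fun ε' hε' n hn => ?_⟩
  · linarith [hmode n, show ((n : ℝ) - a) ^ 2 = n ^ 2 - 2 * a * n + a ^ 2 by ring]
  · exact neg_half_lt_sq_div_sqrt_add_sub hε' (by exact_mod_cast hn)

/-- The Fourier-multiplier inequality comparing the Aharonov–Bohm magnetic form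
with the form of `-∂_w² - T_a + λ'`: for `0 < a ≤ 1/2`, `λ > -a²`,
`0 < ε < (λ + a²)/a` and `0 < λ' < λ + a² - aε`, one has
`n² - 2an²/√(n²+ε) + λ' ≤ (n-a)² + λ` for every `n ∈ ℤ`; equivalently
`a² - 2an + 2an²/√(n²+ε) + λ - λ' ≥ 0` for all `n ∈ ℤ`.  Moreover for every
`ε > 0` and every integer `n ≥ 1`, `n²/√(n²+ε) - n > -ε/2`. -/
theorem fourier_mode_inequality (a lam ε lam' : ℝ) (ha0 : 0 < a) (ha1 : a ≤ 1 / 2)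
    (hlam : -a ^ 2 < lam) (hε0 : 0 < ε) (hε1 : ε < (lam + a ^ 2) / a)
    (hl0 : 0 < lam') (hl1 : lam' < lam + a ^ 2 - a * ε) :
    (∀ n : ℤ,
      (n : ℝ) ^ 2 - 2 * a * (n : ℝ) ^ 2 / Real.sqrt ((n : ℝ) ^ 2 + ε) + lam' ≤
        ((n : ℝ) - a) ^ 2 + lam) ∧
    (∀ n : ℤ,
      0 ≤ a ^ 2 - 2 * a * (n : ℝ) +
        2 * a * (n : ℝ) ^ 2 / Real.sqrt ((n : ℝ) ^ 2 + ε) + lam - lam') ∧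
    (∀ ε' : ℝ, 0 < ε' → ∀ n : ℤ, 1 ≤ n →
      -ε' / 2 < (n : ℝ) ^ 2 / Real.sqrt ((n : ℝ) ^ 2 + ε') - (n : ℝ)) :=
  fourier_mode_inequality_general a lam ε lam' ha0 hε0 hl1
end

section
/- Let w, w' > 0 and c ∈ ℝ with (w − w')² + c² > 0. Then ∫_0^π √(ww') / (w² + w'² − 2ww' cos ϑ + c²) dϑ = π √(ww') / ( √((w + w')² + c²) · √((w − w')² + c²) ), and consequently this integral is at most (π/2) ((w − w')² + c²)^{−1/2}. -/
/-!
With `p = √(a + b)` and `q = √(a - b)` one has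
`a - b cos θ = p² sin² (θ/2) + q² cos² (θ/2)`, so the substitution `t = tan (θ/2)` gives the
primitive `(2 / (p q)) arctan ((p / q) tan (θ/2))` of `(a - b cos θ)⁻¹` on `(-π, π)`. It vanishes
at `0` and tends to `π / (p q)` as `θ → π⁻`, which evaluates the integral for
`a = w² + w'² + c²`, `b = 2 w w'`. The bound follows from
`2 √(w w') ≤ w + w' ≤ √((w + w')² + c²)`.
-/

open MeasureTheory Real Filter Topology Set

noncomputable def cosDenomPrimitive (a b θ : ℝ) : ℝ :=
  2 / (√(a + b) * √(a - b)) * arctan (√(a + b) / √(a - b) * tan (θ / 2))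

section
variable {a b : ℝ}

lemma sub_mul_cos_pos (hab : |b| < a) (θ : ℝ) : 0 < a - b * cos θ := by
  have : |b * cos θ| ≤ |b| := by
    rw [abs_mul]; exact mul_le_of_le_one_right (abs_nonneg b) (abs_cos_le_one θ)
  linarith [le_abs_self (b * cos θ)]

lemma sub_mul_cos_eq_half_angle (hab : |b| < a) (θ : ℝ) :
    a - b * cos θ = √(a + b) ^ 2 * sin (θ / 2) ^ 2 + √(a - b) ^ 2 * cos (θ / 2) ^ 2 := by
  obtain ⟨h₁, h₂⟩ := abs_lt.mp hab
  have hcos : cos θ = cos (θ / 2) ^ 2 - sin (θ / 2) ^ 2 := by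
    rw [← cos_two_mul', mul_div_cancel₀ θ two_ne_zero]
  rw [sq_sqrt (by linarith), sq_sqrt (by linarith), hcos]
  linear_combination (-a) * sin_sq_add_cos_sq (θ / 2)

lemma hasDerivAt_cosDenomPrimitive (hab : |b| < a) {θ : ℝ} (hθ : θ ∈ Ioo (-π) π) :
    HasDerivAt (cosDenomPrimitive a b) (a - b * cos θ)⁻¹ θ := by
  obtain ⟨h₁, h₂⟩ := abs_lt.mp hab
  have hp : 0 < √(a + b) := sqrt_pos.mpr (by linarith)
  have hq : 0 < √(a - b) := sqrt_pos.mpr (by linarith)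
  have hc : 0 < cos (θ / 2) := cos_pos_of_mem_Ioo ⟨by linarith [hθ.1], by linarith [hθ.2]⟩
  have htan : HasDerivAt (fun x ↦ tan (x / 2)) (1 / cos (θ / 2) ^ 2 * (1 / 2)) θ := by
    simpa [Function.comp_def] using (hasDerivAt_tan hc.ne').comp θ ((hasDerivAt_id θ).div_const 2)
  refine (((hasDerivAt_arctan _).comp θ (htan.const_mul (√(a + b) / √(a - b)))).const_mul
    (2 / (√(a + b) * √(a - b)))).congr_deriv ?_
  rw [sub_mul_cos_eq_half_angle hab, tan_eq_sin_div_cos]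
  field_simp
  ring

lemma tendsto_cosDenomPrimitive_nhdsLT_pi (hab : |b| < a) :
    Tendsto (cosDenomPrimitive a b) (𝓝[<] π) (𝓝 (π / (√(a + b) * √(a - b)))) := by
  obtain ⟨h₁, h₂⟩ := abs_lt.mp hab
  have hp : 0 < √(a + b) := sqrt_pos.mpr (by linarith)
  have hq : 0 < √(a - b) := sqrt_pos.mpr (by linarith)
  have half : Tendsto (fun x : ℝ ↦ x / 2) (𝓝[<] π) (𝓝[<] (π / 2)) :=
    tendsto_nhdsWithin_of_tendsto_nhds_of_eventually_within _
      ((continuous_id.div_const 2).tendsto' π (π / 2) rfl |>.mono_left nhdsWithin_le_nhds)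
      (eventually_nhdsWithin_of_forall fun x hx ↦ by simp only [mem_Iio] at hx ⊢; linarith)
  have harctan := tendsto_arctan_atTop.mono_right nhdsWithin_le_nhds |>.comp <|
    (tendsto_tan_pi_div_two.comp half).const_mul_atTop (div_pos hp hq)
  rw [show π / (√(a + b) * √(a - b)) = 2 / (√(a + b) * √(a - b)) * (π / 2) by field_simp]
  exact harctan.const_mul _

theorem integral_inv_sub_mul_cos (hab : |b| < a) :
    ∫ θ in (0)..π, (a - b * cos θ)⁻¹ = π / (√(a + b) * √(a - b)) := by
  have hzero : Tendsto (cosDenomPrimitive a b) (𝓝[>] 0) (𝓝 0) := by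
    have := (hasDerivAt_cosDenomPrimitive hab ⟨neg_neg_of_pos pi_pos, pi_pos⟩).continuousAt
    simpa [cosDenomPrimitive] using this.tendsto.mono_left nhdsWithin_le_nhds
  have hcont : Continuous fun θ ↦ (a - b * cos θ)⁻¹ :=
    (by fun_prop : Continuous fun θ ↦ a - b * cos θ).inv₀ fun θ ↦ (sub_mul_cos_pos hab θ).ne'
  rw [intervalIntegral.integral_eq_sub_of_hasDerivAt_of_tendsto pi_pos
    (fun θ hθ ↦ hasDerivAt_cosDenomPrimitive hab ⟨by linarith [hθ.1, pi_pos], hθ.2⟩)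
    (hcont.intervalIntegrable 0 π) hzero (tendsto_cosDenomPrimitive_nhdsLT_pi hab), sub_zero]
end

lemma two_mul_sqrt_mul_le_sqrt_sq_add_sq (x y c : ℝ) :
    2 * √(x * y) ≤ √((x + y) ^ 2 + c ^ 2) := by
  rw [show (2 : ℝ) = √(2 ^ 2) from (sqrt_sq zero_le_two).symm, ← sqrt_mul (by positivity)]
  exact sqrt_le_sqrt (by nlinarith [sq_nonneg (x - y), sq_nonneg c])

/-- Evaluation of the hypergeometric-type integral
`∫_0^π √(ww') / (w² + w'² - 2ww' cos ϑ + c²) dϑ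
  = π √(ww') / (√((w+w')² + c²) √((w-w')² + c²))`
for `w, w' > 0` and `(w-w')² + c² > 0`, together with the resulting bound
`≤ (π/2) ((w-w')² + c²)^{-1/2}`. -/
theorem cos_integral_eval (w w' c : ℝ) (hw : 0 < w) (hw' : 0 < w')
    (hne : 0 < (w - w') ^ 2 + c ^ 2) :
    (∫ ϑ in Set.Ioo (0 : ℝ) π,
        Real.sqrt (w * w') / (w ^ 2 + w' ^ 2 - 2 * w * w' * Real.cos ϑ + c ^ 2)) =
      π * Real.sqrt (w * w') /
        (Real.sqrt ((w + w') ^ 2 + c ^ 2) * Real.sqrt ((w - w') ^ 2 + c ^ 2)) ∧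
    (∫ ϑ in Set.Ioo (0 : ℝ) π,
        Real.sqrt (w * w') / (w ^ 2 + w' ^ 2 - 2 * w * w' * Real.cos ϑ + c ^ 2)) ≤
      (π / 2) * (Real.sqrt ((w - w') ^ 2 + c ^ 2))⁻¹ := by
  have hab : |2 * w * w'| < w ^ 2 + w' ^ 2 + c ^ 2 :=
    abs_lt.mpr ⟨by nlinarith [mul_pos hw hw'], by linarith⟩
  have hval : (∫ ϑ in Ioo 0 π, √(w * w') / (w ^ 2 + w' ^ 2 - 2 * w * w' * cos ϑ + c ^ 2)) =
      π * √(w * w') / (√((w + w') ^ 2 + c ^ 2) * √((w - w') ^ 2 + c ^ 2)) := by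
    calc _ = √(w * w') * ∫ θ in (0)..π, (w ^ 2 + w' ^ 2 + c ^ 2 - 2 * w * w' * cos θ)⁻¹ := by
          rw [intervalIntegral.integral_of_le pi_pos.le, integral_Ioc_eq_integral_Ioo,
            ← integral_const_mul]
          congr 1 with θ
          ring
      _ = _ := by
          rw [integral_inv_sub_mul_cos hab,
            show w ^ 2 + w' ^ 2 + c ^ 2 + 2 * w * w' = (w + w') ^ 2 + c ^ 2 by ring,
            show w ^ 2 + w' ^ 2 + c ^ 2 - 2 * w * w' = (w - w') ^ 2 + c ^ 2 by ring]
          ring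
  refine ⟨hval, hval ▸ ?_⟩
  set P := √((w + w') ^ 2 + c ^ 2)
  set M := √((w - w') ^ 2 + c ^ 2)
  have hP : 0 < P := by positivity
  have hM : 0 < M := sqrt_pos.mpr hne
  calc π * √(w * w') / (P * M) ≤ π * (P / 2) / (P * M) := by
        gcongr
        linarith [two_mul_sqrt_mul_le_sqrt_sq_add_sq w w' c]
    _ = π / 2 * M⁻¹ := by field_simp
end
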